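/- arXiv:1607.01006 — 6 statements merged into one kernel-verified Lean document; each statement's English description precedes it below -/
import Mathlib

section
/- For every nonnegative integer m, the alternating binomial sum with harmonic numbers satisfies ∑_{k=0}^{2m} (-2)^k C(2m,k) H_k = 2H_{2m} - H_m, where H_j = ∑_{i=1}^j 1/i denotes the j-th harmonic number. -/
/-!
Splitting `C(n+1, k) = C(n, k) + C(n, k-1)` and `H_{k+1} = H_k + 1/(k+1)` gives, for
`S_x(n) = ∑ₖ xᵏ C(n,k) H_k`, the recurrence `S_x(n+1) = (1+x) S_x(n) + ((1+x)^(n+1) - 1)/(n+1)`.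
At `x = -2` two consecutive steps from `n = 2m` add exactly `2/(2m+1)`, which is also the
increment of `2 H_{2m} - H_m`.
-/

open Finset

noncomputable def H (n : ℕ) : ℝ := ∑ i ∈ Finset.range n, (1:ℝ)/(i+1)

lemma H_succ (n : ℕ) : H (n + 1) = H n + 1 / (n + 1) := by
  simp [H, sum_range_succ]

lemma sum_range_pow_succ_mul_choose_succ {R : Type*} [CommRing R] (x : R) (n : ℕ) :
    ∑ k ∈ range n, x ^ (k + 1) * (n.choose (k + 1) : R) = (1 + x) ^ n - 1 := by
  rw [add_comm, add_pow, sum_range_succ', eq_sub_iff_add_eq]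
  simp

lemma sum_range_pow_succ_mul_choose_div {K : Type*} [Field K] [CharZero K] (x : K) (n : ℕ) :
    ∑ k ∈ range (n + 1), x ^ (k + 1) * (n.choose k : K) / (k + 1)
      = ((1 + x) ^ (n + 1) - 1) / (n + 1) := by
  rw [← sum_range_pow_succ_mul_choose_succ, sum_div]
  refine sum_congr rfl fun k _ => ?_
  have hc : ((n + 1 : ℕ) : K) * n.choose k = (n + 1).choose (k + 1) * ((k + 1 : ℕ) : K) := by
    exact_mod_cast Nat.add_one_mul_choose_eq n k
  push_cast at hc
  field_simp
  linear_combination x ^ (k + 1) * hc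

lemma sum_pow_mul_choose_mul_H_succ (x : ℝ) (n : ℕ) :
    ∑ k ∈ range (n + 2), x ^ k * ((n + 1).choose k : ℝ) * H k
      = (1 + x) * ∑ k ∈ range (n + 1), x ^ k * (n.choose k : ℝ) * H k
        + ((1 + x) ^ (n + 1) - 1) / (n + 1) := by
  have hH0 : H 0 = 0 := by simp [H]
  have shift : ∑ k ∈ range (n + 1), x ^ (k + 1) * (n.choose (k + 1) : ℝ) * H (k + 1)
      = ∑ k ∈ range (n + 1), x ^ k * (n.choose k : ℝ) * H k := by
    have h := sum_range_succ' (fun k => x ^ k * (n.choose k : ℝ) * H k) (n + 1)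
    rw [sum_range_succ] at h
    simpa [hH0, Nat.choose_succ_self] using h.symm
  rw [sum_range_succ', add_mul, one_mul, mul_sum, ← shift,
    ← sum_range_pow_succ_mul_choose_div, ← sum_add_distrib, ← sum_add_distrib]
  simp only [hH0, mul_zero, add_zero]
  refine sum_congr rfl fun k _ => ?_
  rw [Nat.choose_succ_succ', H_succ]
  push_cast
  ring

theorem stmt0 (m : ℕ) :
    ∑ k ∈ Finset.range (2*m+1), (-2:ℝ)^k * ((2*m).choose k : ℝ) * H k
      = 2 * H (2*m) - H m := by
  induction m with
  | zero => simp [H]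
  | succ m ih =>
    have hodd : (-1 : ℝ) ^ (2 * m + 1) = -1 := Odd.neg_one_pow ⟨m, rfl⟩
    have heven : (-1 : ℝ) ^ (2 * m + 2) = 1 := Even.neg_one_pow ⟨m + 1, by ring⟩
    rw [show 2 * (m + 1) = 2 * m + 2 by ring, sum_pow_mul_choose_mul_H_succ,
      sum_pow_mul_choose_mul_H_succ, ih, H_succ (2 * m + 1), H_succ (2 * m), H_succ m]
    norm_num [hodd, heven]
    field_simp
    ring
end

section
/- For every positive integer m, ∑_{k=0}^{2m} (-2)^k C(2m,k) · k^2 · H_k = 2·(2m)·(4m-1)·( 2H_{2m} - H_m - 1/(4m-1) ), where H_j is the j-th harmonic number. -/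
/-!
Write `S_n(g) = ∑_k C(n,k) (-2)^k g(k)`. Pascal's rule gives
`S_{n+1}(g) = -S_n(g) - 2 S_n(Δg)` with `Δg(k) = g(k+1) - g(k)`, and the differences of
`H_k`, `k H_k`, `k² H_k` are combinations of lower weights plus `1/(k+1)`, `1`, `k`, whose sums
are elementary (binomial theorem and `(n+1) C(n,k) = (k+1) C(n+1,k+1)`). This yields a triangular
system of first-order recurrences, which is solved at even indices by taking two steps at a time.
-/

open Finset

section BinomialSum

variable {R : Type*} [CommRing R]

def binomialSum (x : R) (n : ℕ) (g : ℕ → R) : R :=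
  ∑ k ∈ range (n + 1), (n.choose k : R) * (x ^ k * g k)

lemma binomialSum_add (x : R) (n : ℕ) (f g : ℕ → R) :
    binomialSum x n (fun k => f k + g k) = binomialSum x n f + binomialSum x n g := by
  simp only [binomialSum, mul_add, sum_add_distrib]

lemma binomialSum_const_mul (x c : R) (n : ℕ) (g : ℕ → R) :
    binomialSum x n (fun k => c * g k) = c * binomialSum x n g := by
  simp only [binomialSum, mul_sum]
  exact sum_congr rfl fun _ _ => by ring

lemma binomialSum_succ (x : R) (n : ℕ) (g : ℕ → R) :
    binomialSum x (n + 1) g =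
      (1 + x) * binomialSum x n g + x * binomialSum x n (fun k => g (k + 1) - g k) := by
  rw [binomialSum, sum_choose_succ_mul (fun i _ => x ^ i * g i)]
  simp only [binomialSum, mul_sum, ← sum_add_distrib]
  exact sum_congr rfl fun _ _ => by ring

lemma binomialSum_one (x : R) (n : ℕ) : binomialSum x n (fun _ => 1) = (1 + x) ^ n := by
  rw [add_comm, add_pow]
  exact sum_congr rfl fun _ _ => by ring

lemma mul_binomialSum_inv_succ {K : Type*} [Field K] [CharZero K] (x : K) (n : ℕ) :
    x * (n + 1) * binomialSum x n (fun k => 1 / (k + 1)) = (1 + x) ^ (n + 1) - 1 := by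
  rw [← binomialSum_one, binomialSum, binomialSum, sum_range_succ' _ (n + 1), mul_sum]
  simp only [Nat.choose_zero_right, Nat.cast_one, pow_zero, mul_one, add_sub_cancel_right]
  refine sum_congr rfl fun k _ => ?_
  have hchoose : ((n + 1 : ℕ).choose (k + 1) : K) * (k + 1) = (n + 1) * n.choose k := by
    exact_mod_cast (Nat.add_one_mul_choose_eq n k).symm
  field_simp
  linear_combination (-x ^ (k + 1)) * hchoose

end BinomialSum

lemma binomialSum_neg_two_succ (n : ℕ) (g : ℕ → ℝ) :
    binomialSum (-2) (n + 1) g =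
      -binomialSum (-2) n g - 2 * binomialSum (-2) n (fun k => g (k + 1) - g k) := by
  rw [binomialSum_succ]; ring

lemma binomialSum_neg_two_one (n : ℕ) : binomialSum (-2 : ℝ) n (fun _ => 1) = (-1) ^ n := by
  rw [binomialSum_one]; norm_num

lemma binomialSum_neg_two_natCast (n : ℕ) :
    binomialSum (-2 : ℝ) n (fun k => (k : ℝ)) = 2 * n * (-1) ^ n := by
  induction n with
  | zero => simp [binomialSum]
  | succ n ih =>
    simp only [binomialSum_neg_two_succ, Nat.cast_succ, add_sub_cancel_left, ih,
      binomialSum_neg_two_one]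
    ring

lemma binomialSum_neg_two_harmonic_succ (n : ℕ) :
    binomialSum (-2) (n + 1) H = -binomialSum (-2) n H - (1 + (-1) ^ n) / (n + 1) := by
  have hinv := mul_binomialSum_inv_succ (-2 : ℝ) n
  simp only [binomialSum_neg_two_succ, H_succ, add_sub_cancel_left]
  field_simp
  linear_combination hinv

lemma binomialSum_neg_two_mul_harmonic_succ (n : ℕ) :
    binomialSum (-2) (n + 1) (fun k => k * H k) =
      -binomialSum (-2) n (fun k => k * H k) - 2 * binomialSum (-2) n H - 2 * (-1) ^ n := by
  have hdiff : (fun k : ℕ => ((k + 1 : ℕ) : ℝ) * H (k + 1) - k * H k) = fun k => H k + 1 := by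
    funext k
    rw [H_succ]
    push_cast
    field_simp
    ring
  rw [binomialSum_neg_two_succ, hdiff, binomialSum_add, binomialSum_neg_two_one]
  ring

lemma binomialSum_neg_two_sq_mul_harmonic_succ (n : ℕ) :
    binomialSum (-2) (n + 1) (fun k => k ^ 2 * H k) =
      -binomialSum (-2) n (fun k => k ^ 2 * H k) - 4 * binomialSum (-2) n (fun k => k * H k)
        - 2 * binomialSum (-2) n H - 2 * (2 * n + 1) * (-1) ^ n := by
  have hdiff : (fun k : ℕ => ((k + 1 : ℕ) : ℝ) ^ 2 * H (k + 1) - k ^ 2 * H k) =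
      fun k => 2 * (k * H k) + H k + k + 1 := by
    funext k
    rw [H_succ]
    push_cast
    field_simp
    ring
  rw [binomialSum_neg_two_succ, hdiff]
  simp only [binomialSum_add, binomialSum_const_mul, binomialSum_neg_two_one,
    binomialSum_neg_two_natCast]
  ring

lemma neg_one_pow_two_mul_succ (m : ℕ) : (-1 : ℝ) ^ (2 * m + 1) = -1 := by
  simp [pow_succ, pow_mul]

lemma binomialSum_neg_two_harmonic_even (m : ℕ) :
    binomialSum (-2) (2 * m) H = 2 * H (2 * m) - H m := by
  induction m with
  | zero => simp [binomialSum, H]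
  | succ m ih =>
    rw [show 2 * (m + 1) = 2 * m + 1 + 1 by ring, binomialSum_neg_two_harmonic_succ,
      binomialSum_neg_two_harmonic_succ, ih, H_succ (2 * m + 1), H_succ (2 * m), H_succ m,
      neg_one_pow_two_mul_succ, pow_mul]
    push_cast
    field_simp
    ring

lemma binomialSum_neg_two_mul_harmonic_even (m : ℕ) :
    binomialSum (-2) (2 * m) (fun k => k * H k) = 4 * m * (2 * H (2 * m) - H m) := by
  induction m with
  | zero => simp [binomialSum]
  | succ m ih =>
    rw [show 2 * (m + 1) = 2 * m + 1 + 1 by ring, binomialSum_neg_two_mul_harmonic_succ,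
      binomialSum_neg_two_mul_harmonic_succ, binomialSum_neg_two_harmonic_succ, ih,
      binomialSum_neg_two_harmonic_even, H_succ (2 * m + 1), H_succ (2 * m), H_succ m,
      neg_one_pow_two_mul_succ, pow_mul]
    push_cast
    field_simp
    ring

lemma binomialSum_neg_two_sq_mul_harmonic_even (m : ℕ) :
    binomialSum (-2) (2 * m) (fun k => k ^ 2 * H k) =
      4 * m * (4 * m - 1) * (2 * H (2 * m) - H m) - 4 * m := by
  induction m with
  | zero => simp [binomialSum]
  | succ m ih =>
    rw [show 2 * (m + 1) = 2 * m + 1 + 1 by ring, binomialSum_neg_two_sq_mul_harmonic_succ,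
      binomialSum_neg_two_sq_mul_harmonic_succ, binomialSum_neg_two_mul_harmonic_succ,
      binomialSum_neg_two_harmonic_succ, ih, binomialSum_neg_two_mul_harmonic_even,
      binomialSum_neg_two_harmonic_even, H_succ (2 * m + 1), H_succ (2 * m), H_succ m,
      neg_one_pow_two_mul_succ, pow_mul]
    push_cast
    field_simp
    ring

theorem stmt6_general (m : ℕ) :
    ∑ k ∈ Finset.range (2*m+1), (-2:ℝ)^k * ((2*m).choose k : ℝ) * (k:ℝ)^2 * H k
      = 2 * (2*(m:ℝ)) * (4*(m:ℝ)-1) * (2 * H (2*m) - H m - 1/(4*(m:ℝ)-1)) := by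
  have hsum : ∑ k ∈ range (2 * m + 1), (-2 : ℝ) ^ k * ((2 * m).choose k : ℝ) * (k : ℝ) ^ 2 * H k
      = binomialSum (-2) (2 * m) (fun k => k ^ 2 * H k) :=
    sum_congr rfl fun _ _ => by ring
  have h4m : (4 * m - 1 : ℝ) ≠ 0 := by
    rw [sub_ne_zero]
    exact_mod_cast (by omega : 4 * m ≠ 1)
  rw [hsum, binomialSum_neg_two_sq_mul_harmonic_even]
  field_simp
  ring

theorem stmt6 (m : ℕ) (hm : 1 ≤ m) :
    ∑ k ∈ Finset.range (2*m+1), (-2:ℝ)^k * ((2*m).choose k : ℝ) * (k:ℝ)^2 * H k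
      = 2 * (2*(m:ℝ)) * (4*(m:ℝ)-1) * (2 * H (2*m) - H m - 1/(4*(m:ℝ)-1)) :=
  stmt6_general m
end

section
/- For every nonnegative integer m, ∑_{k=0}^{2m+1} (-2)^k C(2m+1,k) · k^2 · H_k = 2·(2m+1)·(4m+1)·( H_m - 2H_{2m} - 1/(4m+1) ), where H_j is the j-th harmonic number. -/
open Finset

/-!
Write `A_j(n) = ∑_k C(n,k) x^k k^j H_k` (`binomHarmonicSum x j n`). Pascal's rule together
with `H_{k+1} = H_k + 1/(k+1)` gives `(n+1) A_0(n+1) = (n+1)(1+x) A_0(n) + (1+x)^{n+1} - 1`,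
and `k C(n+1,k) = (n+1) C(n,k-1)` lowers the weight `k^j`, expressing `A_1(n+1)` and `A_2(n+1)`
through `A_0` and `A_1` at `n`. At `x = -2` we have `1 + x = -1`, so two steps of the recurrence
give `A_0(2m) = 2H_{2m} - H_m` and `A_1(2m) = 4m A_0(2m)`, whence
`A_2(2m+1) = -2(2m+1)((4m+1) A_0(2m) + 1)`.
-/

lemma H_zero : H 0 = 0 := by simp [H]

noncomputable def binomHarmonicSum (x : ℝ) (j n : ℕ) : ℝ :=
  ∑ k ∈ range (n + 1), x ^ k * n.choose k * (k : ℝ) ^ j * H k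

lemma cast_add_one_mul_choose (n k : ℕ) :
    ((n : ℝ) + 1) * n.choose k = (n + 1).choose (k + 1) * ((k : ℝ) + 1) := by
  exact_mod_cast Nat.add_one_mul_choose_eq n k

lemma sum_range_pow_mul_choose (x : ℝ) (n : ℕ) :
    ∑ k ∈ range (n + 1), x ^ k * n.choose k = (1 + x) ^ n := by
  simp [add_comm 1 x, add_pow]

lemma add_one_mul_sum_range_pow_mul_choose_div (x : ℝ) (n : ℕ) :
    (n + 1) * ∑ k ∈ range (n + 1), x ^ (k + 1) * n.choose k / (k + 1) =
      (1 + x) ^ (n + 1) - 1 := by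
  rw [← sum_range_pow_mul_choose x (n + 1),
    sum_range_succ' (fun k => x ^ k * ((n + 1).choose k : ℝ)) (n + 1), mul_sum]
  simp only [pow_zero, Nat.choose_zero_right, Nat.cast_one, mul_one, add_sub_cancel_right]
  refine sum_congr rfl fun k _ => ?_
  rw [mul_div_assoc', div_eq_iff (by positivity)]
  linear_combination x ^ (k + 1) * cast_add_one_mul_choose n k

lemma sum_range_pow_mul_choose_succ_mul (x : ℝ) (g : ℕ → ℝ) (n : ℕ) :
    ∑ k ∈ range (n + 2), x ^ k * (n + 1).choose k * g k =
      ∑ k ∈ range (n + 1), x ^ k * n.choose k * (g k + x * g (k + 1)) := by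
  calc ∑ k ∈ range (n + 2), x ^ k * (n + 1).choose k * g k
      = ∑ k ∈ range (n + 2), ((n + 1).choose k : ℝ) * (x ^ k * g k) :=
        sum_congr rfl fun k _ => by ring
    _ = ∑ k ∈ range (n + 1), (n.choose k : ℝ) * (x ^ k * g k) +
          ∑ k ∈ range (n + 1), (n.choose k : ℝ) * (x ^ (k + 1) * g (k + 1)) :=
        sum_choose_succ_mul (fun k _ => x ^ k * g k) n
    _ = _ := by
        rw [← sum_add_distrib]
        exact sum_congr rfl fun k _ => by ring

lemma binomHarmonicSum_succ_succ (x : ℝ) (j n : ℕ) :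
    binomHarmonicSum x (j + 1) (n + 1) =
      (n + 1) * x *
        ∑ k ∈ range (n + 1), x ^ k * n.choose k * ((k : ℝ) + 1) ^ j * H (k + 1) := by
  rw [binomHarmonicSum, sum_range_succ', mul_sum]
  simp only [Nat.cast_zero, zero_pow j.succ_ne_zero, mul_zero, zero_mul, add_zero,
    Nat.cast_add_one]
  refine sum_congr rfl fun k _ => ?_
  linear_combination -x ^ k * x * ((k : ℝ) + 1) ^ j * H (k + 1) * cast_add_one_mul_choose n k

lemma add_one_mul_binomHarmonicSum_zero_succ (x : ℝ) (n : ℕ) :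
    (n + 1) * binomHarmonicSum x 0 (n + 1) =
      (n + 1) * (1 + x) * binomHarmonicSum x 0 n + ((1 + x) ^ (n + 1) - 1) := by
  simp only [binomHarmonicSum, pow_zero, mul_one]
  rw [sum_range_pow_mul_choose_succ_mul, ← add_one_mul_sum_range_pow_mul_choose_div, mul_sum,
    mul_sum, mul_sum, ← sum_add_distrib]
  refine sum_congr rfl fun k _ => ?_
  rw [H_succ]
  field_simp
  ring

lemma binomHarmonicSum_one_succ (x : ℝ) (n : ℕ) :
    binomHarmonicSum x 1 (n + 1) =
      (n + 1) * (binomHarmonicSum x 0 (n + 1) - binomHarmonicSum x 0 n) := by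
  rw [mul_sub, add_one_mul_binomHarmonicSum_zero_succ, binomHarmonicSum_succ_succ,
    ← add_one_mul_sum_range_pow_mul_choose_div]
  simp only [binomHarmonicSum, pow_zero, mul_one, mul_sum, ← sum_add_distrib, ← sum_sub_distrib]
  refine sum_congr rfl fun k _ => ?_
  rw [H_succ]
  field_simp
  ring

lemma binomHarmonicSum_two_succ (x : ℝ) (n : ℕ) :
    binomHarmonicSum x 2 (n + 1) =
      (n + 1) * x * (binomHarmonicSum x 1 n + binomHarmonicSum x 0 n + (1 + x) ^ n) := by
  rw [binomHarmonicSum_succ_succ, ← sum_range_pow_mul_choose]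
  simp only [binomHarmonicSum, ← sum_add_distrib]
  congr 1
  refine sum_congr rfl fun k _ => ?_
  rw [H_succ]
  field_simp

lemma binomHarmonicSum_neg_two_zero_succ (n : ℕ) :
    binomHarmonicSum (-2) 0 (n + 1) =
      -binomHarmonicSum (-2) 0 n + ((-1) ^ (n + 1) - 1) / (n + 1) := by
  have h := add_one_mul_binomHarmonicSum_zero_succ (-2) n
  norm_num at h
  field_simp
  linear_combination h

lemma binomHarmonicSum_neg_two_zero_two_mul (m : ℕ) :
    binomHarmonicSum (-2) 0 (2 * m) = 2 * H (2 * m) - H m := by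
  induction m with
  | zero => simp [binomHarmonicSum, H_zero]
  | succ m ih =>
    rw [show 2 * (m + 1) = 2 * m + 1 + 1 by ring, binomHarmonicSum_neg_two_zero_succ,
      binomHarmonicSum_neg_two_zero_succ, ih, H_succ, H_succ, H_succ]
    norm_num [pow_succ, pow_mul]
    field_simp
    ring

lemma binomHarmonicSum_neg_two_one_two_mul (m : ℕ) :
    binomHarmonicSum (-2) 1 (2 * m) = 4 * m * binomHarmonicSum (-2) 0 (2 * m) := by
  cases m with
  | zero => simp [binomHarmonicSum]
  | succ m =>
    rw [show 2 * (m + 1) = 2 * m + 1 + 1 by ring, binomHarmonicSum_one_succ,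
      binomHarmonicSum_neg_two_zero_succ]
    norm_num [pow_succ, pow_mul]
    ring

theorem stmt7 (m : ℕ) :
    ∑ k ∈ Finset.range (2*m+2), (-2:ℝ)^k * ((2*m+1).choose k : ℝ) * (k:ℝ)^2 * H k
      = 2 * (2*(m:ℝ)+1) * (4*(m:ℝ)+1) * (H m - 2 * H (2*m) - 1/(4*(m:ℝ)+1)) := by
  change binomHarmonicSum (-2) 2 (2 * m + 1) = _
  rw [binomHarmonicSum_two_succ, binomHarmonicSum_neg_two_one_two_mul,
    binomHarmonicSum_neg_two_zero_two_mul]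
  norm_num [pow_mul]
  field_simp
  ring
end

section
/- For all complex numbers a, b and every nonnegative integer n, the terminating Watson sum satisfies ∑_{k=0}^{n} [(a)_k (b)_k (-n)_k] / [k! ((1+a+b)/2)_k (-2n)_k] = [((1+a)/2)_n ((1+b)/2)_n] / [(1/2)_n ((1+a+b)/2)_n], where (x)_k = x(x+1)⋯(x+k-1) is the Pochhammer symbol, assuming no zero factors occur in denominators. -/
/-!
Zeilberger's method. With `F n k` the summand and `S n = ∑ k, F n k`, the certificate
`G n k = -2k(2n+1)((1+a+b)/2 + k - 1) F (n+1) k / (2n+2-k)` satisfies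
`(2n+1)(a+b+2n+1) F (n+1) k - (a+2n+1)(b+2n+1) F n k = G n (k+1) - G n k`,
a rational-function identity once every term is written as a multiple of `F (n+1) k`.
Summing over `k` gives `(2n+1)(a+b+2n+1) S (n+1) = (a+2n+1)(b+2n+1) S n`,
the recurrence satisfied by the product of Pochhammer symbols on the right.
-/

open Finset

noncomputable def poch (x : ℂ) (k : ℕ) : ℂ := ∏ i ∈ Finset.range k, (x + (i:ℂ))

lemma poch_zero (x : ℂ) : poch x 0 = 1 := by simp [poch]

lemma poch_succ (x : ℂ) (k : ℕ) : poch x (k + 1) = poch x k * (x + k) :=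
  prod_range_succ _ _

lemma poch_succ' (x : ℂ) (k : ℕ) : poch x (k + 1) = x * poch (x + 1) k := by
  rw [poch, prod_range_succ', mul_comm, Nat.cast_zero, add_zero]
  congr 1
  refine prod_congr rfl fun i _ => ?_
  push_cast
  ring

lemma poch_add_one {x : ℂ} (hx : x ≠ 0) (k : ℕ) :
    poch (x + 1) k = poch x k * ((x + k) / x) := by
  rw [mul_div_assoc', eq_div_iff hx, ← poch_succ, poch_succ', mul_comm]

lemma add_ne_zero_of_poch_ne_zero {x : ℂ} {m k : ℕ} (h : poch x m ≠ 0) (hk : k < m) :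
    x + k ≠ 0 :=
  prod_ne_zero_iff.mp h k (mem_range.mpr hk)

lemma poch_half_ne_zero (n : ℕ) : poch (1 / 2) n ≠ 0 := by
  refine prod_ne_zero_iff.mpr fun i _ h => ?_
  have := congrArg Complex.re h
  simp at this
  linarith

section Watson

variable (a b : ℂ)

noncomputable def watsonTerm (n k : ℕ) : ℂ :=
  poch a k * poch b k * poch (-(n : ℂ)) k /
    ((Nat.factorial k : ℂ) * poch ((1 + a + b) / 2) k * poch (-2 * (n : ℂ)) k)

noncomputable def watsonCert (n k : ℕ) : ℂ :=
  -2 * k * (2 * n + 1) * ((1 + a + b) / 2 + k - 1) * watsonTerm a b (n + 1) k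
    / (2 * n + 2 - k)

lemma watsonTerm_succ_right (n k : ℕ) :
    watsonTerm a b n (k + 1) = watsonTerm a b n k *
      ((a + k) * (b + k) * (-n + k) / ((k + 1) * ((1 + a + b) / 2 + k) * (-2 * n + k))) := by
  simp only [watsonTerm, poch_succ, Nat.factorial_succ, Nat.cast_mul, Nat.cast_succ]
  rw [div_mul_div_comm]
  congr 1 <;> ring

lemma poch_neg_natCast (n k : ℕ) :
    poch (-(n : ℂ)) k = poch (-((n + 1 : ℕ) : ℂ)) k * ((n + 1 - k) / (n + 1)) := by
  have hn : -((n + 1 : ℕ) : ℂ) ≠ 0 := neg_ne_zero.mpr (Nat.cast_ne_zero.mpr n.succ_ne_zero)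
  rw [show -(n : ℂ) = -((n + 1 : ℕ) : ℂ) + 1 by push_cast; ring, poch_add_one hn,
    ← neg_div_neg_eq]
  push_cast
  congr 2 <;> ring

lemma poch_neg_two_mul_natCast (n k : ℕ) :
    poch (-2 * (n : ℂ)) k = poch (-2 * ((n + 1 : ℕ) : ℂ)) k *
      ((2 * n + 2 - k) * (2 * n + 1 - k) / ((2 * n + 2) * (2 * n + 1))) := by
  have h1 := poch_neg_natCast (2 * n) k
  have h2 := poch_neg_natCast (2 * n + 1) k
  push_cast at h1 h2
  rw [show -2 * (n : ℂ) = -(2 * n) by ring, h1, h2, mul_assoc, div_mul_div_comm]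
  push_cast
  congr 3 <;> ring

lemma watsonTerm_eq_succ_left_mul (n k : ℕ) :
    watsonTerm a b n k = watsonTerm a b (n + 1) k *
      ((n + 1 - k) / (n + 1) /
        ((2 * n + 2 - k) * (2 * n + 1 - k) / ((2 * n + 2) * (2 * n + 1)))) := by
  rw [watsonTerm, watsonTerm, poch_neg_natCast n k, poch_neg_two_mul_natCast n k,
    div_mul_div_comm]
  congr 1 <;> ring

lemma watsonTerm_telescope {n k : ℕ} (hk : k ≤ n) (hc : (1 + a + b) / 2 + k ≠ 0) :
    (2 * n + 1) * (a + b + 2 * n + 1) * watsonTerm a b (n + 1) k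
      - (a + 2 * n + 1) * (b + 2 * n + 1) * watsonTerm a b n k
      = watsonCert a b n (k + 1) - watsonCert a b n k := by
  have h1 : (2 * ((n : ℂ) + 1) - k) ≠ 0 :=
    sub_ne_zero.mpr (by exact_mod_cast (by omega : 2 * (n + 1) ≠ k))
  have h2 : (2 * ((n : ℂ) + 1) - (k + 1)) ≠ 0 :=
    sub_ne_zero.mpr (by exact_mod_cast (by omega : 2 * (n + 1) ≠ k + 1))
  have h3 : (-(2 * ((n : ℂ) + 1)) + k) ≠ 0 := fun h => h1 (by linear_combination -h)
  have h4 : (1 + a + b + 2 * k) ≠ 0 := fun h => hc (by linear_combination h / 2)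
  have h5 : (2 * n + 1 - k : ℂ) ≠ 0 := fun h => h2 (by linear_combination h)
  rw [watsonCert, watsonCert, watsonTerm_succ_right a b (n + 1) k,
    watsonTerm_eq_succ_left_mul a b n k]
  set T := watsonTerm a b (n + 1) k
  push_cast
  field_simp
  ring

lemma watsonCert_zero (n : ℕ) : watsonCert a b n 0 = 0 := by
  simp [watsonCert]

lemma watsonCert_add_watsonTerm_top (n : ℕ) :
    watsonCert a b n (n + 1)
      + (2 * n + 1) * (a + b + 2 * n + 1) * watsonTerm a b (n + 1) (n + 1) = 0 := by
  have hn : (n + 1 : ℂ) ≠ 0 := by exact_mod_cast n.succ_ne_zero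
  rw [watsonCert]
  push_cast
  rw [show (2 * n + 2 - (n + 1) : ℂ) = n + 1 by ring]
  field_simp
  ring

lemma watsonSum_recurrence {n : ℕ} (hc : poch ((1 + a + b) / 2) (n + 1) ≠ 0) :
    (2 * n + 1) * (a + b + 2 * n + 1) * ∑ k ∈ range (n + 2), watsonTerm a b (n + 1) k
      = (a + 2 * n + 1) * (b + 2 * n + 1) * ∑ k ∈ range (n + 1), watsonTerm a b n k := by
  have htel : ∑ k ∈ range (n + 1), ((2 * n + 1) * (a + b + 2 * n + 1) * watsonTerm a b (n + 1) k
      - (a + 2 * n + 1) * (b + 2 * n + 1) * watsonTerm a b n k) = watsonCert a b n (n + 1) := by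
    rw [← sub_zero (watsonCert a b n (n + 1)), ← watsonCert_zero a b n,
      ← sum_range_sub (watsonCert a b n)]
    exact sum_congr rfl fun k hk => watsonTerm_telescope a b (by simp at hk; omega)
      (add_ne_zero_of_poch_ne_zero hc (by simpa using hk))
  rw [sum_sub_distrib, ← mul_sum, ← mul_sum] at htel
  rw [sum_range_succ _ (n + 1)]
  linear_combination htel + watsonCert_add_watsonTerm_top a b n

lemma watsonSum_mul_poch {n : ℕ} (h : ∀ k ≤ n, poch ((1 + a + b) / 2) k ≠ 0) :
    (∑ k ∈ range (n + 1), watsonTerm a b n k) * (poch (1 / 2) n * poch ((1 + a + b) / 2) n)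
      = poch ((1 + a) / 2) n * poch ((1 + b) / 2) n := by
  induction n with
  | zero => simp [watsonTerm, poch_zero]
  | succ m ih =>
    have hrec := watsonSum_recurrence a b (h (m + 1) le_rfl)
    have ih := ih fun k hk => h k (by omega)
    simp only [poch_succ]
    linear_combination (poch (1 / 2) m * poch ((1 + a + b) / 2) m / 4) * hrec
      + ((a + 2 * m + 1) * (b + 2 * m + 1) / 4) * ih

end Watson

theorem stmt10 (a b : ℂ) (n : ℕ)
    (h : ∀ k ≤ n, poch ((1+a+b)/2) k ≠ 0) :
    ∑ k ∈ Finset.range (n+1),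
        (poch a k * poch b k * poch (-(n:ℂ)) k) /
          ((Nat.factorial k : ℂ) * poch ((1+a+b)/2) k * poch (-2*(n:ℂ)) k)
      = (poch ((1+a)/2) n * poch ((1+b)/2) n) /
          (poch (1/2) n * poch ((1+a+b)/2) n) :=
  (eq_div_iff (mul_ne_zero (poch_half_ne_zero n) (h n le_rfl))).mpr (watsonSum_mul_poch a b h)
end

section
/- For every nonnegative integer n and real x > -1 (or x avoiding negative integers), ∑_{k=0}^{n} C(2n-k, n) · C(x+k, k) = C(x+2n+1, n), where C(x+k, k) is the generalized binomial coefficient. -/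
/-!
Negating the upper index, `C(-r-1, k) = (-1)^k C(r+k, k)`, turns the Chu–Vandermonde identity
`C(a+b, n) = ∑ C(a, i) C(b, n-i)` at `a = -x-1`, `b = -n-1` into the stated sum, after the
signs `(-1)^i (-1)^(n-i) = (-1)^n` on both sides cancel.
-/

open Finset

noncomputable def gch (y : ℝ) (s : ℕ) : ℝ := (∏ i ∈ Finset.range s, (y - (i:ℝ))) / (Nat.factorial s)

open Polynomial in
theorem gch_eq_ringChoose (y : ℝ) (s : ℕ) : gch y s = Ring.choose y s := by
  rw [Ring.choose_eq_smul, ← aeval_eq_smeval, aeval_def, ← eval_map, algebraMap_int_eq,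
    descPochhammer_map, descPochhammer_eval_eq_prod_range, gch, smul_eq_mul, div_eq_inv_mul]

namespace Ring

variable {R : Type*} [CommRing R] [BinomialRing R]

theorem choose_neg_sub_one (r : R) (k : ℕ) :
    choose (-r - 1) k = (-1) ^ k * choose (r + k) k := by
  rw [sub_eq_add_neg, ← neg_add, choose_neg, add_sub_right_comm, add_sub_cancel_right,
    Units.smul_def, zsmul_eq_mul, Int.cast_negOnePow_natCast]

theorem sum_antidiagonal_choose_add_self (r s : R) (n : ℕ) :
    ∑ ij ∈ antidiagonal n, choose (r + ij.1) ij.1 * choose (s + ij.2) ij.2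
      = choose (r + s + 1 + n) n := by
  have vandermonde := add_choose_eq n (Commute.all (-r - 1) (-s - 1))
  rw [show -r - 1 + (-s - 1) = -(r + s + 1) - 1 by ring, choose_neg_sub_one] at vandermonde
  have signs : ∀ ij ∈ antidiagonal n, choose (-r - 1) ij.1 * choose (-s - 1) ij.2
      = (-1) ^ n * (choose (r + ij.1) ij.1 * choose (s + ij.2) ij.2) := by
    rintro ⟨i, j⟩ hij
    rw [HasAntidiagonal.mem_antidiagonal] at hij
    rw [choose_neg_sub_one, choose_neg_sub_one, ← hij, pow_add]
    ring
  rw [sum_congr rfl signs, ← mul_sum] at vandermonde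
  have scaled := congrArg ((-1 : R) ^ n * ·) vandermonde
  simp only [← mul_assoc, ← mul_pow, neg_mul_neg, one_mul, one_pow] at scaled
  exact scaled.symm

end Ring

theorem stmt13_general (x : ℝ) (n : ℕ) :
    ∑ k ∈ Finset.range (n+1), (((2*n-k).choose n : ℕ) : ℝ) * gch (x+(k:ℝ)) k
      = gch (x+2*(n:ℝ)+1) n := by
  have coeff : ∀ k ∈ range (n + 1),
      (((2*n-k).choose n : ℕ) : ℝ) = Ring.choose ((n : ℝ) + (n - k : ℕ)) (n - k) := by
    intro k hk
    have hkn : k ≤ n := Nat.lt_succ_iff.mp (mem_range.mp hk)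
    rw [← Nat.cast_add, Ring.choose_natCast, ← Nat.choose_symm_add,
      show n + (n - k) = 2 * n - k by omega]
  simp_rw [gch_eq_ringChoose]
  rw [sum_congr rfl fun k hk => by rw [coeff k hk, mul_comm],
    ← Nat.sum_antidiagonal_eq_sum_range_succ
      (fun i j => Ring.choose (x + i) i * Ring.choose ((n : ℝ) + j) j),
    Ring.sum_antidiagonal_choose_add_self]
  congr 1
  ring

theorem stmt13 (x : ℝ) (hx : -1 < x) (n : ℕ) :
    ∑ k ∈ Finset.range (n+1), (((2*n-k).choose n : ℕ) : ℝ) * gch (x+(k:ℝ)) k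
      = gch (x+2*(n:ℝ)+1) n :=
  stmt13_general x n
end

section
/- For every nonnegative integer n, ∑_{k=0}^{n} C(2n-k, n) · k · H_k^{(2)} = (1/2) · C(2n+1, n-1) · ( H_{2n+1}^{(2)} - 2/n - (H_{2n+1} - H_n)(H_{2n+1} - H_n - 2 - 2/n) ), for n ≥ 1, where H_j^{(2)} = ∑ 1/i^2 and H_j = ∑ 1/i. -/
/-!
Put `S_w(r, m) = ∑_{j ≤ m} C(r+m-j, r) w_j`, the coefficient of `x^m` in
`(1-x)^{-(r+1)} ∑_j w_j x^j`, and `P = S_{1/j}`, `Q = S_{1/j²}` (Lean's `1/0 = 0` kills the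
`j = 0` term, so `P(0, m) = H_m` and `Q(0, m) = H_m^{(2)}`). Swapping the two summations and
summing the binomial coefficients turns the left-hand side into `(2n+1) Q(n+1,n) - (n+1) Q(n+2,n)`.
Pascal's rule `S(r+1,m+1) = S(r+1,m) + S(r,m+1)` and the absorption identity
`(r+1) S_w(r+1,m) = (r+m+1) S_w(r,m) - S_{j w_j}(r,m)` do the rest: they give
`P(r,m) = C(r+m,r) (H_{r+m} - H_r)`, a first-order recurrence for the central values `Q(n+1,n)`,
and `Q(n+2,n)` in terms of `Q(n+1,n)` and `P(n+1,n)`.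
-/

open Finset

noncomputable def H2 (n : ℕ) : ℝ := ∑ i ∈ Finset.range n, (1:ℝ)/((i:ℝ)+1)^2

noncomputable def binomConv (w : ℕ → ℝ) (r m : ℕ) : ℝ :=
  ∑ j ∈ range (m + 1), ((r + m - j).choose r : ℝ) * w j

lemma binomConv_zero_left (w : ℕ → ℝ) (m : ℕ) : binomConv w 0 m = ∑ j ∈ range (m + 1), w j := by
  simp [binomConv]

lemma binomConv_zero_right (w : ℕ → ℝ) (r : ℕ) : binomConv w r 0 = w 0 := by
  simp [binomConv]

lemma binomConv_succ_succ (w : ℕ → ℝ) (r m : ℕ) :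
    binomConv w (r + 1) (m + 1) = binomConv w (r + 1) m + binomConv w r (m + 1) := by
  have pascal : ∀ j ∈ range (m + 1 + 1), ((r + 1 + (m + 1) - j).choose (r + 1) : ℝ) * w j =
      (r + (m + 1) - j).choose (r + 1) * w j + (r + (m + 1) - j).choose r * w j := fun j hj => by
    rw [show r + 1 + (m + 1) - j = r + (m + 1) - j + 1 by grind, Nat.choose_succ_succ']
    push_cast; ring
  have shift : ∑ j ∈ range (m + 1 + 1), ((r + (m + 1) - j).choose (r + 1) : ℝ) * w j
      = binomConv w (r + 1) m := by
    rw [sum_range_succ, show r + (m + 1) - (m + 1) = r by omega, Nat.choose_succ_self]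
    simp only [Nat.cast_zero, zero_mul, add_zero, binomConv]
    exact sum_congr rfl fun j hj => by rw [show r + (m + 1) - j = r + 1 + m - j by omega]
  rw [binomConv, sum_congr rfl pascal, sum_add_distrib, shift]
  rfl

lemma succ_mul_binomConv_succ (w : ℕ → ℝ) (r m : ℕ) :
    (r + 1 : ℝ) * binomConv w (r + 1) m
      = (r + m + 1 : ℝ) * binomConv w r m - binomConv (fun j => j * w j) r m := by
  simp only [binomConv, mul_sum, ← sum_sub_distrib]
  refine sum_congr rfl fun j hj => ?_
  have hjm : j ≤ m := Nat.lt_succ_iff.mp (mem_range.mp hj)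
  have absorb : ((r + m - j + 1 : ℕ) : ℝ) * (r + m - j).choose r
      = (r + 1 + m - j).choose (r + 1) * (r + 1) := by
    rw [show r + 1 + m - j = r + m - j + 1 by omega]; exact_mod_cast Nat.add_one_mul_choose_eq _ _
  rw [show r + m - j + 1 = r + 1 + m - j by omega, Nat.cast_sub (by omega)] at absorb
  push_cast at absorb
  linear_combination (-w j) * absorb

lemma H_eq_sum_range_succ (n : ℕ) : H n = ∑ j ∈ range (n + 1), 1 / (j : ℝ) := by
  simp [H, sum_range_succ']

lemma H2_eq_sum_range_succ (n : ℕ) : H2 n = ∑ j ∈ range (n + 1), 1 / (j : ℝ) ^ 2 := by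
  simp [H2, sum_range_succ']

lemma H2_succ (n : ℕ) : H2 (n + 1) = H2 n + 1 / (n + 1) ^ 2 := by
  simp [H2, sum_range_succ]

lemma binomConv_one_div (r m : ℕ) :
    binomConv (fun j => 1 / (j : ℝ)) r m = (r + m).choose r * (H (r + m) - H r) := by
  induction r generalizing m with
  | zero =>
    rw [binomConv_zero_left, ← H_eq_sum_range_succ]
    simp [H]
  | succ r ihr =>
    induction m with
    | zero => simp [binomConv_zero_right]
    | succ m ihm =>
      rw [binomConv_succ_succ, ihm, ihr, show r + 1 + (m + 1) = r + (m + 1) + 1 by omega,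
        show r + 1 + m = r + (m + 1) by omega, H_succ (r + (m + 1)), H_succ r]
      have pascal : ((r + (m + 1) + 1).choose (r + 1) : ℝ)
          = (r + (m + 1)).choose r + (r + (m + 1)).choose (r + 1) := by
        exact_mod_cast Nat.choose_succ_succ' _ _
      have absorb : ((r + (m + 1) + 1).choose (r + 1) : ℝ) * (r + 1)
          = (r + (m + 1) + 1) * (r + (m + 1)).choose r := by
        exact_mod_cast (Nat.add_one_mul_choose_eq _ _).symm
      rw [pascal] at absorb ⊢
      push_cast at absorb ⊢
      field_simp
      linear_combination (-1 : ℝ) * absorb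

lemma succ_mul_binomConv_one_div_sq (r m : ℕ) :
    (r + 1 : ℝ) * binomConv (fun j => 1 / (j : ℝ) ^ 2) (r + 1) m
      = (r + m + 1 : ℝ) * binomConv (fun j => 1 / (j : ℝ) ^ 2) r m
        - (r + m).choose r * (H (r + m) - H r) := by
  have weight : (fun j : ℕ => (j : ℝ) * (1 / (j : ℝ) ^ 2)) = fun j : ℕ => 1 / (j : ℝ) := by
    funext j
    rcases eq_or_ne (j : ℝ) 0 with hj | hj
    · simp [hj]
    · field_simp
  rw [succ_mul_binomConv_succ, weight, binomConv_one_div]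

lemma choose_two_mul_add_two (n : ℕ) :
    ((2 * n + 2).choose (n + 1) : ℝ) = 2 * (2 * n + 1).choose (n + 1) := by
  rw [Nat.choose_succ_succ, Nat.choose_symm_half]
  push_cast; ring

lemma binomConv_one_div_sq_central (n : ℕ) :
    binomConv (fun j => 1 / (j : ℝ) ^ 2) (n + 1) n
      = 1 / 2 * (2 * n + 1).choose (n + 1) * (H2 (2 * n + 1) - (H (2 * n + 1) - H n) ^ 2) := by
  induction n with
  | zero => simp [binomConv_zero_right, H, H2]
  | succ n ih =>
    have pascal := binomConv_succ_succ (fun j => 1 / (j : ℝ) ^ 2) (n + 1) n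
    have absorb₁ := succ_mul_binomConv_one_div_sq (n + 1) (n + 1)
    have absorb₀ := succ_mul_binomConv_one_div_sq (n + 1) n
    rw [ih] at absorb₀
    simp only [show n + 1 + 1 = n + 2 from rfl, show n + 1 + (n + 1) = 2 * n + 2 by ring,
      show n + 1 + n = 2 * n + 1 by ring, show 2 * (n + 1) + 1 = 2 * n + 3 by ring]
      at pascal absorb₁ absorb₀ ⊢
    push_cast at absorb₁ absorb₀ ⊢
    have recurrence : (n + 1 : ℝ) * (n + 2) * binomConv (fun j => 1 / (j : ℝ) ^ 2) (n + 2) (n + 1)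
        = (n + 2) * (((2 * n + 2).choose (n + 1) : ℝ) * (H (2 * n + 2) - H (n + 1)))
          + (2 * n + 3) * ((2 * n + 2) * (1 / 2 * (2 * n + 1).choose (n + 1)
              * (H2 (2 * n + 1) - (H (2 * n + 1) - H n) ^ 2))
            - (2 * n + 1).choose (n + 1) * (H (2 * n + 1) - H (n + 1))) := by
      linear_combination ((n : ℝ) + 2) * (2 * n + 3) * pascal - ((n : ℝ) + 2) * absorb₁
        + (2 * (n : ℝ) + 3) * absorb₀
    have absorb₂ : ((2 * n + 3).choose (n + 2) : ℝ) * (n + 2)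
        = (2 * n + 3) * (2 * n + 2).choose (n + 1) := by
      exact_mod_cast (Nat.add_one_mul_choose_eq (2 * n + 2) (n + 1)).symm
    have hcentral : ((2 * n + 3).choose (n + 2) : ℝ)
        = 2 * (2 * n + 3) * (2 * n + 1).choose (n + 1) / (n + 2) := by
      rw [eq_div_iff (by positivity)]
      rw [choose_two_mul_add_two] at absorb₂
      linear_combination absorb₂
    apply mul_left_cancel₀ (by positivity : (n + 1 : ℝ) * (n + 2) ≠ 0)
    rw [recurrence, hcentral, choose_two_mul_add_two, show 2 * n + 3 = 2 * n + 1 + 1 + 1 by ring,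
      show 2 * n + 2 = 2 * n + 1 + 1 by ring, H_succ (2 * n + 1 + 1), H_succ (2 * n + 1),
      H2_succ (2 * n + 1 + 1), H2_succ (2 * n + 1), H_succ n]
    push_cast
    field_simp
    ring

lemma sum_range_sub_mul_choose (n t : ℕ) :
    ∑ a ∈ range t, ((n : ℝ) - a) * (n + a).choose n
      = (2 * n + 1) * (n + t).choose (n + 1) - (n + 1) * (n + t + 1).choose (n + 2) := by
  induction t with
  | zero => simp
  | succ t ih =>
    have absorb : ((n + t).choose (n + 1) : ℝ) * (n + 1) = (n + t).choose n * t := by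
      have := Nat.choose_succ_right_eq (n + t) n
      rw [show n + t - n = t by omega] at this
      exact_mod_cast this
    have pascal₁ : ((n + t + 1).choose (n + 1) : ℝ) = (n + t).choose n + (n + t).choose (n + 1) := by
      exact_mod_cast Nat.choose_succ_succ' _ _
    have pascal₂ : ((n + t + 1 + 1).choose (n + 2) : ℝ)
        = (n + t + 1).choose (n + 1) + (n + t + 1).choose (n + 2) := by
      exact_mod_cast Nat.choose_succ_succ' _ _
    rw [sum_range_succ, ih, ← add_assoc, pascal₂, pascal₁]
    linear_combination absorb

lemma sum_Ico_choose_mul (n j : ℕ) (hj : j ≤ n) :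
    ∑ k ∈ Ico j (n + 1), ((2 * n - k).choose n : ℝ) * k
      = (2 * n + 1) * (n + 1 + n - j).choose (n + 1) - (n + 1) * (n + 2 + n - j).choose (n + 2) := by
  have reflect := sum_Ico_reflect (fun k => ((2 * n - k).choose n : ℝ) * k) 0
    (show n + 1 - j ≤ n + 1 by omega)
  rw [show n + 1 - (n + 1 - j) = j by omega, Nat.sub_zero, Nat.Ico_zero_eq_range] at reflect
  have summand : ∀ a ∈ range (n + 1 - j),
      ((2 * n - (n - a)).choose n : ℝ) * (n - a : ℕ) = ((n : ℝ) - a) * (n + a).choose n :=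
    fun a ha => by
      have ha : a ≤ n := by simp at ha; omega
      rw [show 2 * n - (n - a) = n + a by omega, Nat.cast_sub ha]
      ring
  rw [← reflect, sum_congr rfl summand, sum_range_sub_mul_choose,
    show n + (n + 1 - j) = n + 1 + n - j by omega, show n + 1 + n - j + 1 = n + 2 + n - j by omega]

lemma sum_choose_mul_sum_range_succ (w : ℕ → ℝ) (n : ℕ) :
    ∑ k ∈ range (n + 1), ((2 * n - k).choose n : ℝ) * k * ∑ j ∈ range (k + 1), w j
      = (2 * n + 1) * binomConv w (n + 1) n - (n + 1) * binomConv w (n + 2) n := by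
  have swap := sum_Ico_Ico_comm 0 (n + 1) fun j k => ((2 * n - k).choose n : ℝ) * k * w j
  simp only [← range_eq_Ico] at swap
  simp only [mul_sum, ← swap, binomConv, ← sum_mul, ← sum_sub_distrib]
  refine sum_congr rfl fun j hj => ?_
  rw [sum_Ico_choose_mul n j (Nat.lt_succ_iff.mp (mem_range.mp hj))]
  ring

lemma choose_two_mul_add_one_sub_one (n : ℕ) (hn : 1 ≤ n) :
    ((2 * n + 1).choose (n - 1) : ℝ) * (n + 2) = n * (2 * n + 1).choose (n + 1) := by
  have h := Nat.choose_succ_right_eq (2 * n + 1) (n - 1)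
  rw [Nat.sub_add_cancel hn, ← Nat.choose_symm_half, show 2 * n + 1 - (n - 1) = n + 2 by omega] at h
  exact_mod_cast h.symm.trans (mul_comm _ _)

theorem stmt17 (n : ℕ) (hn : 1 ≤ n) :
    ∑ k ∈ Finset.range (n+1), (((2*n-k).choose n : ℕ) : ℝ) * (k:ℝ) * H2 k
      = (1/2) * (((2*n+1).choose (n-1) : ℕ) : ℝ) *
        (H2 (2*n+1) - 2/(n:ℝ)
          - (H (2*n+1) - H n) * (H (2*n+1) - H n - 2 - 2/(n:ℝ))) := by
  rw [sum_congr rfl fun k _ => by rw [H2_eq_sum_range_succ k], sum_choose_mul_sum_range_succ]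
  have absorb := succ_mul_binomConv_one_div_sq (n + 1) n
  rw [binomConv_one_div_sq_central, show n + 1 + n = 2 * n + 1 by ring, H_succ n] at absorb
  push_cast at absorb
  have hQ : binomConv (fun j => 1 / (j : ℝ) ^ 2) (n + 2) n
      = ((2 * n + 2) * (1 / 2 * (2 * n + 1).choose (n + 1) * (H2 (2 * n + 1) - (H (2 * n + 1) - H n) ^ 2))
        - (2 * n + 1).choose (n + 1) * (H (2 * n + 1) - (H n + 1 / (n + 1)))) / (n + 2) := by
    rw [eq_div_iff (by positivity)]
    linear_combination absorb
  have hbinom : ((2 * n + 1).choose (n - 1) : ℝ) = n * (2 * n + 1).choose (n + 1) / (n + 2) := by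
    rw [eq_div_iff (by positivity)]
    exact choose_two_mul_add_one_sub_one n hn
  have hn' : (n : ℝ) ≠ 0 := by positivity
  rw [binomConv_one_div_sq_central, hQ, hbinom]
  field_simp
  ring
end
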